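/- arXiv:2408.11901 — 3 statements merged into one kernel-verified Lean document; each statement's English description precedes it below -/
import Mathlib

section
/- Let W be a (p+1)×(p+1) real Wishart matrix with r degrees of freedom with Bartlett decomposition W = L Lᵀ, where L is lower triangular with independent entries: diagonal entries L_{ii} chi-distributed with r−i degrees of freedom (0-indexed, r > p), and strictly lower entries standard Gaussian. Let L̃ be L with its first column removed and W̃ = L̃ L̃ᵀ. Then for every t ≥ 0, P[ r^{−1/2}·max_{1≤i,j≤p} |W_{ij} − W̃_{ij}| ≥ t² + √2·r^{−1/4}·t + r^{−1/2} ] ≤ p·exp(−(√r/2)·t²). -/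
/-!
For `1 ≤ i, j ≤ p` we have `W i j - W̃ i j = g i * g j` with `g i = L i 0` standard Gaussian.
If `s ^ 2 ≤ |g i * g j|` then `s ≤ |g i|` or `s ≤ |g j|`, so a union bound over the `p`
variables `g i` together with the sharp tail `P(|g| ≥ s) ≤ exp (-s ^ 2 / 2)` (the Chernoff
bound `2 exp (-s ^ 2 / 2)` is too weak) suffices: with
`u = r ^ (1/4)` and `s = u t + √2 / 2`, the threshold condition forces `s ^ 2 ≤ |g i * g j|`,
and `exp (-s ^ 2 / 2) ≤ exp (-u ^ 2 t ^ 2 / 2)`.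
-/

open MeasureTheory ProbabilityTheory Matrix Real Set
open scoped NNReal ENNReal

namespace ProbabilityTheory

variable {v : ℝ≥0}

lemma gaussianReal_zero_Iic_neg (s : ℝ) :
    gaussianReal 0 v (Iic (-s)) = gaussianReal 0 v (Ici s) := by
  have h_neg := gaussianReal_map_neg (μ := 0) (v := v)
  rw [neg_zero] at h_neg
  conv_lhs => rw [← h_neg, Measure.map_apply measurable_neg measurableSet_Iic]
  simp

lemma gaussianReal_zero_Ici_zero (hv : v ≠ 0) : gaussianReal 0 v (Ici 0) = 2⁻¹ := by
  have := nullSingletonClass_gaussianReal (μ := 0) hv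
  have h_symm : gaussianReal 0 v (Iic 0) = gaussianReal 0 v (Ici 0) := by
    simpa using gaussianReal_zero_Iic_neg (v := v) 0
  have h_sum :=
    measure_union_add_inter (μ := gaussianReal 0 v) (Iic 0) (measurableSet_Ici (a := 0))
  rw [Iic_union_Ici, Iic_inter_Ici, Icc_self, measure_univ, measure_singleton, add_zero,
    h_symm, ← two_mul, mul_comm] at h_sum
  exact ENNReal.eq_inv_of_mul_eq_one_left h_sum.symm

lemma gaussianReal_Ici_self (μ : ℝ) (hv : v ≠ 0) : gaussianReal μ v (Ici μ) = 2⁻¹ := by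
  rw [← gaussianReal_zero_Ici_zero hv, ← zero_add μ, ← gaussianReal_map_add_const,
    Measure.map_apply (measurable_add_const μ) measurableSet_Ici]
  simp

lemma gaussianPDFReal_le_exp_mul_gaussianPDFReal {s x : ℝ} (hs : 0 ≤ s) (hsx : s ≤ x) :
    gaussianPDFReal 0 v x ≤ exp (-s ^ 2 / (2 * v)) * gaussianPDFReal s v x := by
  simp only [gaussianPDFReal, sub_zero]
  rw [mul_left_comm, ← exp_add]
  gcongr
  rw [← add_div]
  exact div_le_div_of_nonneg_right (by nlinarith) (by positivity)

/-- The factor `1 / 2` comes from comparing with the `N(s, v)` density, which has mass `1 / 2`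
on `[s, ∞)`. -/
lemma gaussianReal_zero_Ici_le (hv : v ≠ 0) {s : ℝ} (hs : 0 ≤ s) :
    gaussianReal 0 v (Ici s) ≤ ENNReal.ofReal (exp (-s ^ 2 / (2 * v))) / 2 := by
  calc gaussianReal 0 v (Ici s)
      ≤ ∫⁻ x in Ici s, ENNReal.ofReal (exp (-s ^ 2 / (2 * v))) * gaussianPDF s v x := by
        rw [gaussianReal_apply 0 hv]
        refine setLIntegral_mono' measurableSet_Ici fun x hx => ?_
        rw [gaussianPDF, gaussianPDF, ← ENNReal.ofReal_mul (exp_nonneg _)]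
        exact ENNReal.ofReal_le_ofReal (gaussianPDFReal_le_exp_mul_gaussianPDFReal hs hx)
    _ = ENNReal.ofReal (exp (-s ^ 2 / (2 * v))) / 2 := by
        rw [lintegral_const_mul _ (measurable_gaussianPDF s v), ← gaussianReal_apply s hv,
          gaussianReal_Ici_self s hv, ENNReal.div_eq_inv_mul, mul_comm]

lemma gaussianReal_zero_le_abs_le (hv : v ≠ 0) {s : ℝ} (hs : 0 ≤ s) :
    gaussianReal 0 v {x | s ≤ |x|} ≤ ENNReal.ofReal (exp (-s ^ 2 / (2 * v))) := by
  have h_split : {x : ℝ | s ≤ |x|} = Iic (-s) ∪ Ici s := by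
    ext x; simp [le_abs', or_comm]
  calc gaussianReal 0 v {x | s ≤ |x|}
      ≤ gaussianReal 0 v (Iic (-s)) + gaussianReal 0 v (Ici s) := h_split ▸ measure_union_le _ _
    _ ≤ ENNReal.ofReal (exp (-s ^ 2 / (2 * v))) / 2 +
          ENNReal.ofReal (exp (-s ^ 2 / (2 * v))) / 2 := by
        rw [gaussianReal_zero_Iic_neg]
        gcongr <;> exact gaussianReal_zero_Ici_le hv hs
    _ = ENNReal.ofReal (exp (-s ^ 2 / (2 * v))) := ENNReal.add_halves _

end ProbabilityTheory

lemma le_abs_or_le_abs_of_sq_le_abs_mul {s a b : ℝ} (h : s ^ 2 ≤ |a * b|) :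
    s ≤ |a| ∨ s ≤ |b| := by
  by_contra! hab
  rw [abs_mul] at h
  nlinarith [abs_nonneg a, abs_nonneg b, mul_lt_mul'' hab.1 hab.2 (abs_nonneg a) (abs_nonneg b)]

lemma measure_exists_sq_le_abs_mul_le {Ω ι : Type*} [MeasurableSpace Ω] {P : Measure Ω}
    [Fintype ι] {v : ℝ≥0} (hv : v ≠ 0) {X : ι → Ω → ℝ} (hX : ∀ i, Measurable (X i))
    (hlaw : ∀ i, P.map (X i) = gaussianReal 0 v) {s : ℝ} (hs : 0 ≤ s) :
    P {ω | ∃ i j, s ^ 2 ≤ |X i ω * X j ω|} ≤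
      Fintype.card ι * ENNReal.ofReal (exp (-s ^ 2 / (2 * v))) := by
  have h_cover :
      {ω | ∃ i j, s ^ 2 ≤ |X i ω * X j ω|} ⊆ ⋃ i, X i ⁻¹' {x | s ≤ |x|} := by
    rintro ω ⟨i, j, h⟩
    rcases le_abs_or_le_abs_of_sq_le_abs_mul h with hi | hj
    exacts [mem_iUnion.mpr ⟨i, hi⟩, mem_iUnion.mpr ⟨j, hj⟩]
  have h_tail (i : ι) :
      P (X i ⁻¹' {x | s ≤ |x|}) ≤ ENNReal.ofReal (exp (-s ^ 2 / (2 * v))) := by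
    rw [← Measure.map_apply (hX i) (measurableSet_le measurable_const measurable_abs), hlaw i]
    exact gaussianReal_zero_le_abs_le hv hs
  calc _ ≤ ∑ i, P (X i ⁻¹' {x | s ≤ |x|}) :=
        (measure_mono h_cover).trans (measure_iUnion_fintype_le _ _)
    _ ≤ ∑ _ : ι, ENNReal.ofReal (exp (-s ^ 2 / (2 * v))) :=
        Finset.sum_le_sum fun i _ => h_tail i
    _ = _ := by simp

lemma add_sq_le_of_le_inv_sq_mul {u t x : ℝ} (hu : 0 < u)
    (h : t ^ 2 + √2 * u⁻¹ * t + (u ^ 2)⁻¹ ≤ (u ^ 2)⁻¹ * x) : (u * t + √2 / 2) ^ 2 ≤ x := by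
  have h_scaled :
      (u * t + √2 / 2) ^ 2 + 2⁻¹ = u ^ 2 * (t ^ 2 + √2 * u⁻¹ * t + (u ^ 2)⁻¹) := by
    field_simp
    linear_combination sq_sqrt (zero_le_two (α := ℝ))
  have h_cancel : u ^ 2 * ((u ^ 2)⁻¹ * x) = x := by field_simp
  have h_mul := mul_le_mul_of_nonneg_left h (sq_nonneg u)
  rw [← h_scaled, h_cancel] at h_mul
  linarith

theorem stmt6_general {Ω : Type*} [MeasurableSpace Ω] (P : Measure Ω)
    (p r : ℕ) (hrp : p < r)
    (L : Ω → Matrix (Fin (p + 1)) (Fin (p + 1)) ℝ)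
    (hmeas : ∀ i j, Measurable fun ω => L ω i j)
    (hgauss : ∀ i j : Fin (p + 1), j < i →
      P.map (fun ω => L ω i j) = gaussianReal 0 1)
    (W Wt : Ω → Matrix (Fin (p + 1)) (Fin (p + 1)) ℝ)
    (hWt : ∀ ω (i j : Fin (p + 1)), Wt ω i j = W ω i j - L ω i 0 * L ω j 0)
    (t : ℝ) (ht : 0 ≤ t) :
    P {ω | ∃ i j : Fin p,
        t ^ 2 + Real.sqrt 2 * (r : ℝ) ^ (-(1 : ℝ) / 4) * t + (r : ℝ) ^ (-(1 : ℝ) / 2) ≤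
          (r : ℝ) ^ (-(1 : ℝ) / 2) * |W ω i.succ j.succ - Wt ω i.succ j.succ|} ≤
      ENNReal.ofReal (p * Real.exp (-(Real.sqrt r / 2) * t ^ 2)) := by
  have hr : (0 : ℝ) < r := by exact_mod_cast (Nat.zero_le p).trans_lt hrp
  set u : ℝ := (r : ℝ) ^ ((1 : ℝ) / 4)
  have hu : 0 < u := rpow_pos_of_pos hr _
  have h_quarter : (r : ℝ) ^ (-(1 : ℝ) / 4) = u⁻¹ := by rw [neg_div, rpow_neg hr.le]
  have h_half : (r : ℝ) ^ (-(1 : ℝ) / 2) = (u ^ 2)⁻¹ := by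
    rw [neg_div, rpow_neg hr.le, ← rpow_natCast, ← rpow_mul hr.le]; norm_num
  have h_sqrt : √(r : ℝ) = u ^ 2 := by
    rw [sqrt_eq_rpow, ← rpow_natCast, ← rpow_mul hr.le]; norm_num
  set s := u * t + √2 / 2
  have h_event : {ω | ∃ i j : Fin p,
      t ^ 2 + √2 * (r : ℝ) ^ (-(1 : ℝ) / 4) * t + (r : ℝ) ^ (-(1 : ℝ) / 2) ≤
        (r : ℝ) ^ (-(1 : ℝ) / 2) * |W ω i.succ j.succ - Wt ω i.succ j.succ|} ⊆
      {ω | ∃ i j : Fin p, s ^ 2 ≤ |L ω i.succ 0 * L ω j.succ 0|} := by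
    rintro ω ⟨i, j, h⟩
    rw [h_quarter, h_half, hWt, sub_sub_cancel] at h
    exact ⟨i, j, add_sq_le_of_le_inv_sq_mul hu h⟩
  calc _ ≤ _ := measure_mono h_event
    _ ≤ Fintype.card (Fin p) * ENNReal.ofReal (exp (-s ^ 2 / (2 * ((1 : ℝ≥0) : ℝ)))) :=
        measure_exists_sq_le_abs_mul_le one_ne_zero (fun i : Fin p => hmeas i.succ 0)
          (fun i : Fin p => hgauss i.succ 0 i.succ_pos) (by positivity)
    _ ≤ _ := by
        rw [Fintype.card_fin, ENNReal.ofReal_mul (Nat.cast_nonneg p), ENNReal.ofReal_natCast,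
          h_sqrt, NNReal.coe_one, mul_one]
        gcongr
        have : u * t ≤ s := le_add_of_nonneg_right (by positivity)
        nlinarith [mul_nonneg hu.le ht]

/-- Robustness of the Bartlett decomposition. `W = L Lᵀ` is a
`(p+1)×(p+1)` real Wishart matrix with `r > p` degrees of freedom: `L` is lower
triangular with independent entries, diagonal entries chi-distributed with `r − i`
degrees of freedom (so their square is chi-squared, i.e. Gamma with shape `(r−i)/2`
and rate `1/2`), strictly lower entries standard Gaussian. `W̃ = L̃ L̃ᵀ` with the
first column of `L` removed, so `W i j − W̃ i j = L i 0 · L j 0`. Then for `t ≥ 0`,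
`P[r^{−1/2} max_{1≤i,j≤p} |W_{ij} − W̃_{ij}| ≥ t² + √2 r^{−1/4} t + r^{−1/2}]
  ≤ p·exp(−(√r/2)t²)`. -/
theorem stmt6 {Ω : Type*} [MeasurableSpace Ω] (P : Measure Ω) [IsProbabilityMeasure P]
    (p r : ℕ) (hrp : p < r)
    (L : Ω → Matrix (Fin (p + 1)) (Fin (p + 1)) ℝ)
    (hmeas : ∀ i j, Measurable fun ω => L ω i j)
    (hlow : ∀ ω (i j : Fin (p + 1)), i < j → L ω i j = 0)
    (hindep : iIndepFun
      (fun (q : {q : Fin (p + 1) × Fin (p + 1) // q.2 ≤ q.1}) ω => L ω q.1.1 q.1.2) P)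
    (hgauss : ∀ i j : Fin (p + 1), j < i →
      P.map (fun ω => L ω i j) = gaussianReal 0 1)
    (hdiagnn : ∀ (i : Fin (p + 1)) ω, 0 ≤ L ω i i)
    (hchi : ∀ i : Fin (p + 1),
      P.map (fun ω => (L ω i i) ^ 2) = gammaMeasure (((r : ℝ) - (i : ℕ)) / 2) (1 / 2))
    (W Wt : Ω → Matrix (Fin (p + 1)) (Fin (p + 1)) ℝ)
    (hW : ∀ ω, W ω = L ω * (L ω)ᵀ)
    (hWt : ∀ ω (i j : Fin (p + 1)), Wt ω i j = W ω i j - L ω i 0 * L ω j 0)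
    (t : ℝ) (ht : 0 ≤ t) :
    P {ω | ∃ i j : Fin p,
        t ^ 2 + Real.sqrt 2 * (r : ℝ) ^ (-(1 : ℝ) / 4) * t + (r : ℝ) ^ (-(1 : ℝ) / 2) ≤
          (r : ℝ) ^ (-(1 : ℝ) / 2) * |W ω i.succ j.succ - Wt ω i.succ j.succ|} ≤
      ENNReal.ofReal (p * Real.exp (-(Real.sqrt r / 2) * t ^ 2)) :=
  stmt6_general P p r hrp L hmeas hgauss W Wt hWt t ht
end

section
/- Let p, q be probability measures on ℝ^d with characteristic functions φ, γ. Suppose every mixed moment of order k ≤ t of p differs from the corresponding moment of q by at most ε > 0 in absolute value, and all mixed moments of both distributions of order k > t are bounded in absolute value by (C√k)^k for some C ≥ 0. Then for all u ∈ ℝ^d with ‖u‖₁ ≤ √(t+1)/(2eC), |φ(u) − γ(u)| ≤ ε·exp(‖u‖₁) + 2^{1−t}. -/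
/-!
Write `S x = ∑ j, u j * x j`. By the multinomial theorem, `∫ S ^ n` is a combination of the mixed
moments of order `n` with total weight `‖u‖₁ ^ n`. Hence the moments of `S` under `p` and `q` differ
by at most `ε ‖u‖₁ ^ n` for `n ≤ t`, while for `n > t` the bound `n! ≥ (n / e) ^ n` and the
constraint on `‖u‖₁` give `|∫ S ^ n| / n! ≤ (‖u‖₁ C √n) ^ n / n! ≤ 2 ^ (-n)`. Expanding
`exp (i S)` to an even order `N > t`, the Taylor remainder `|S| ^ N / N!` integrates to a moment
again, so `|φ u - γ u| ≤ ε e ^ ‖u‖₁ + 2 ∑_{t < n ≤ N} 2 ^ (-n) ≤ ε e ^ ‖u‖₁ + 2 ^ (1 - t)`.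
-/

open MeasureTheory Finset Complex
open scoped Nat

theorem hasDerivAt_cexp_sub_sum_range (N : ℕ) (z : ℂ) :
    HasDerivAt (fun w : ℂ => cexp w - ∑ n ∈ range (N + 1), w ^ n / (n ! : ℂ))
      (cexp z - ∑ n ∈ range N, z ^ n / (n ! : ℂ)) z := by
  have hsum : HasDerivAt (fun w : ℂ => ∑ n ∈ range N, w ^ (n + 1) / ((n + 1)! : ℂ) + 1)
      (∑ n ∈ range N, z ^ n / (n ! : ℂ)) z := by
    refine (HasDerivAt.fun_sum fun n _ => ?_).add_const 1
    refine ((hasDerivAt_pow (n + 1) z).div_const _).congr_deriv ?_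
    rw [Nat.factorial_succ]
    push_cast
    field_simp
  simp_rw [sum_range_succ' _ N, pow_zero, Nat.factorial_zero, Nat.cast_one, div_one]
  exact (hasDerivAt_exp z).sub hsum

theorem norm_cexp_I_mul_sub_sum_range_le (x : ℝ) (N : ℕ) :
    ‖cexp (I * x) - ∑ n ∈ range N, (I * x) ^ n / (n ! : ℂ)‖ ≤ |x| ^ N / N ! := by
  induction N generalizing x with
  | zero => simp [norm_exp_I_mul_ofReal]
  | succ N ih =>
    -- Compare `s ↦ G (I s x)` with `s ↦ |x| ^ (N + 1) s ^ (N + 1) / (N + 1)!` on `[0, 1]`,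
    -- which treats both signs of `x` at once.
    set G : ℂ → ℂ := fun w => cexp w - ∑ n ∈ range (N + 1), w ^ n / (n ! : ℂ)
    have hG : ∀ s : ℝ, HasDerivAt (fun s : ℝ => G (I * ↑(s * x)))
        ((cexp (I * ↑(s * x)) - ∑ n ∈ range N, (I * ↑(s * x)) ^ n / (n ! : ℂ)) * (I * x)) s := by
      intro s
      refine (hasDerivAt_cexp_sub_sum_range N _).comp s ?_
      simpa using ((hasDerivAt_id (s : ℂ)).comp_ofReal.mul_const (x : ℂ)).const_mul I
    have hB : ∀ s : ℝ, HasDerivAt (fun s : ℝ => |x| ^ (N + 1) * (s ^ (N + 1) / (N + 1)!))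
        (|x| ^ (N + 1) * (s ^ N / N !)) s := by
      intro s
      refine (((hasDerivAt_pow (N + 1) s).div_const _).const_mul _).congr_deriv ?_
      rw [Nat.factorial_succ]
      push_cast
      field_simp
    have key := image_norm_le_of_norm_deriv_right_le_deriv_boundary (a := 0) (b := 1)
      (fun s _ => (hG s).continuousAt.continuousWithinAt) (fun s _ => (hG s).hasDerivWithinAt)
      (by simp [G, sum_range_succ']) hB (fun s hs => ?_) (Set.right_mem_Icc.2 zero_le_one)
    · simpa [G, div_eq_mul_inv] using key
    · calc _ = ‖cexp (I * ↑(s * x)) - ∑ n ∈ range N, (I * ↑(s * x)) ^ n / (n ! : ℂ)‖ * |x| := by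
            simp
        _ ≤ |s * x| ^ N / N ! * |x| := by gcongr; exact ih (s * x)
        _ = |x| ^ (N + 1) * (s ^ N / N !) := by
            rw [abs_mul, abs_of_nonneg hs.1]; ring

theorem norm_integral_cexp_I_mul_sub_sum_range_le {α : Type*} [MeasurableSpace α]
    {μ : Measure α} {f : α → ℝ} (hf : ∀ n : ℕ, Integrable (fun x => f x ^ n) μ) (N : ℕ) :
    ‖∫ x, cexp (I * f x) ∂μ - ∑ n ∈ range N, I ^ n / (n ! : ℂ) * ↑(∫ x, f x ^ n ∂μ)‖ ≤
      (∫ x, |f x| ^ N ∂μ) / N ! := by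
  have hpoly : ∀ n, Integrable (fun x => (I * f x) ^ n / (n ! : ℂ)) μ := fun n => by
    simpa [mul_pow, mul_div_right_comm] using (hf n).ofReal.const_mul (I ^ n / n ! : ℂ)
  have hexp : Integrable (fun x => cexp (I * f x)) μ := by
    refine (hf 0).mono' ?_ (ae_of_all _ fun x => by simp [norm_exp_I_mul_ofReal])
    exact (by fun_prop : Continuous fun y : ℝ => cexp (I * y)).comp_aestronglyMeasurable
      (by simpa using (hf 1).aestronglyMeasurable)
  have hmoment : ∀ n, I ^ n / (n ! : ℂ) * ↑(∫ x, f x ^ n ∂μ) =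
      ∫ x, (I * f x) ^ n / (n ! : ℂ) ∂μ := fun n => by
    rw [← integral_complex_ofReal, ← integral_const_mul]
    congr 1 with x
    push_cast
    ring
  simp_rw [hmoment]
  rw [← integral_finsetSum _ fun n _ => hpoly n,
    ← integral_sub hexp (integrable_finsetSum _ fun n _ => hpoly n), ← integral_div]
  refine norm_integral_le_of_norm_le ?_
    (ae_of_all _ fun x => norm_cexp_I_mul_sub_sum_range_le (f x) N)
  simpa [abs_pow] using (hf N).abs.div_const (N ! : ℝ)

theorem inv_factorial_le_exp_one_div_pow (n : ℕ) : (n ! : ℝ)⁻¹ ≤ (Real.exp 1 / n) ^ n := by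
  rcases n.eq_zero_or_pos with rfl | hn
  · simp
  have h := Real.pow_div_factorial_le_exp (x := (n : ℝ)) (Nat.cast_nonneg n) n
  rw [← Real.exp_one_pow, div_le_iff₀ (by positivity)] at h
  rw [div_pow, le_div_iff₀ (by positivity), inv_mul_le_iff₀ (by positivity)]
  linarith

theorem mul_sqrt_pow_div_factorial_le {a : ℝ} {t n : ℕ} (ha : 0 ≤ a)
    (h : 2 * Real.exp 1 * a ≤ Real.sqrt (t + 1)) (hn : t < n) :
    (a * Real.sqrt n) ^ n / n ! ≤ (1 / 2) ^ n := by
  have hn0 : (0 : ℝ) < n := by exact_mod_cast (Nat.zero_le t).trans_lt hn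
  have hsq : Real.sqrt (t + 1) ≤ Real.sqrt n := Real.sqrt_le_sqrt (by exact_mod_cast hn)
  have hbase : a * Real.sqrt n * (Real.exp 1 / n) ≤ 1 / 2 :=
    calc a * Real.sqrt n * (Real.exp 1 / n) = 2 * Real.exp 1 * a * Real.sqrt n / (2 * n) := by
          field_simp
      _ ≤ Real.sqrt n * Real.sqrt n / (2 * n) := by gcongr; exact h.trans hsq
      _ = 1 / 2 := by rw [Real.mul_self_sqrt hn0.le]; field_simp
  calc (a * Real.sqrt n) ^ n / n ! = (a * Real.sqrt n) ^ n * (n ! : ℝ)⁻¹ := div_eq_mul_inv _ _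
    _ ≤ (a * Real.sqrt n) ^ n * (Real.exp 1 / n) ^ n := by
        gcongr; exact inv_factorial_le_exp_one_div_pow n
    _ ≤ (1 / 2) ^ n := by rw [← mul_pow]; gcongr

theorem two_mul_sum_Ico_half_pow_le (t N : ℕ) :
    2 * ∑ n ∈ Ico (t + 1) N, (1 / 2 : ℝ) ^ n ≤ 2 ^ ((1 : ℤ) - t) :=
  calc _ ≤ 2 * ((1 / 2 : ℝ) ^ (t + 1) / (1 - 1 / 2)) := by
        gcongr; exact geom_sum_Ico_le_of_lt_one (by norm_num) (by norm_num)
    _ = 2 ^ ((1 : ℤ) - t) := by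
        rw [zpow_sub₀ two_ne_zero, zpow_one, zpow_natCast, one_div_pow]
        field_simp
        ring

theorem norm_sub_le_of_partial_sums {z w : ℂ} {a b : ℕ → ℝ} {t N : ℕ} {ε M : ℝ}
    (hε : 0 ≤ ε) (hM : 0 ≤ M) (htN : t < N)
    (hz : ‖z - ∑ n ∈ range N, I ^ n / (n ! : ℂ) * a n‖ ≤ (1 / 2) ^ N)
    (hw : ‖w - ∑ n ∈ range N, I ^ n / (n ! : ℂ) * b n‖ ≤ (1 / 2) ^ N)
    (hhead : ∀ n ≤ t, |a n - b n| ≤ ε * M ^ n)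
    (ha : ∀ n, t < n → |a n| / n ! ≤ (1 / 2) ^ n) (hb : ∀ n, t < n → |b n| / n ! ≤ (1 / 2) ^ n) :
    ‖z - w‖ ≤ ε * Real.exp M + 2 ^ ((1 : ℤ) - t) := by
  have hsplit : z - w = (z - ∑ n ∈ range N, I ^ n / (n ! : ℂ) * a n) -
      (w - ∑ n ∈ range N, I ^ n / (n ! : ℂ) * b n) +
      ∑ n ∈ range N, I ^ n / (n ! : ℂ) * ↑(a n - b n) := by
    simp only [ofReal_sub, mul_sub, sum_sub_distrib]
    ring
  have hterm : ∀ n, ‖I ^ n / (n ! : ℂ) * ↑(a n - b n)‖ = |a n - b n| / n ! := fun n => by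
    rw [norm_mul, Complex.norm_real, Real.norm_eq_abs]
    simp [div_eq_inv_mul, mul_comm]
  have hhead_sum : ∑ n ∈ range (t + 1), |a n - b n| / n ! ≤ ε * Real.exp M :=
    calc _ ≤ ∑ n ∈ range (t + 1), ε * (M ^ n / n !) := sum_le_sum fun n hn => by
          rw [mul_div_assoc']
          gcongr
          exact hhead n (Nat.lt_succ_iff.1 (mem_range.1 hn))
      _ ≤ ε * Real.exp M := by rw [← mul_sum]; gcongr; exact Real.sum_le_exp_of_nonneg hM _
  have htail_sum : ∑ n ∈ Ico (t + 1) N, |a n - b n| / n ! ≤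
      2 * ∑ n ∈ Ico (t + 1) N, (1 / 2 : ℝ) ^ n := by
    rw [mul_sum]
    refine sum_le_sum fun n hn => ?_
    have htn : t < n := (mem_Ico.1 hn).1
    calc |a n - b n| / n ! ≤ |a n| / n ! + |b n| / n ! := by
          rw [← add_div]; gcongr; exact abs_sub _ _
      _ ≤ 2 * (1 / 2) ^ n := by linarith [ha n htn, hb n htn]
  have hgeom := two_mul_sum_Ico_half_pow_le t (N + 1)
  rw [sum_Ico_succ_top htN] at hgeom
  calc ‖z - w‖ ≤ (1 / 2) ^ N + (1 / 2) ^ N + ∑ n ∈ range N, |a n - b n| / n ! := by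
        rw [hsplit]
        refine (norm_add_le _ _).trans (add_le_add ((norm_sub_le _ _).trans (add_le_add hz hw)) ?_)
        exact (norm_sum_le _ _).trans_eq (sum_congr rfl fun n _ => hterm n)
    _ ≤ ε * Real.exp M + 2 ^ ((1 : ℤ) - t) := by
        rw [← sum_range_add_sum_Ico _ htN]
        linarith

theorem sum_mul_pow_eq_sum_piAntidiag {ι R : Type*} [Fintype ι] [DecidableEq ι] [CommSemiring R]
    (u x : ι → R) (n : ℕ) :
    (∑ j, u j * x j) ^ n = ∑ k ∈ piAntidiag univ n,
      (Nat.multinomial univ k : R) * ((∏ j, u j ^ k j) * ∏ j, x j ^ k j) := by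
  simp_rw [sum_pow_eq_sum_piAntidiag, mul_pow, prod_mul_distrib]

theorem abs_sum_multinomial_mul_le {ι : Type*} [Fintype ι] [DecidableEq ι] (u : ι → ℝ) (n : ℕ)
    {g : (ι → ℕ) → ℝ} {B : ℝ} (hg : ∀ k ∈ piAntidiag univ n, |g k| ≤ B) :
    |∑ k ∈ piAntidiag univ n, (Nat.multinomial univ k : ℝ) * ((∏ j, u j ^ k j) * g k)| ≤
      B * (∑ j, |u j|) ^ n :=
  calc _ ≤ ∑ k ∈ piAntidiag univ n, (Nat.multinomial univ k : ℝ) * ((∏ j, |u j| ^ k j) * B) := by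
        refine (abs_sum_le_sum_abs _ _).trans (sum_le_sum fun k hk => ?_)
        simp_rw [abs_mul, Nat.abs_cast, abs_prod, abs_pow]
        gcongr
        exact hg k hk
    _ = B * (∑ j, |u j|) ^ n := by
        simp_rw [sum_pow_eq_sum_piAntidiag, ← mul_assoc, ← sum_mul, mul_comm]

section LinearForm

variable {ι : Type*} [Fintype ι] [DecidableEq ι] (u : ι → ℝ) {μ ν : Measure (ι → ℝ)}

theorem integrable_sum_mul_pow (hμ : ∀ k : ι → ℕ, Integrable (fun x => ∏ j, x j ^ k j) μ)
    (n : ℕ) : Integrable (fun x => (∑ j, u j * x j) ^ n) μ := by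
  simp_rw [sum_mul_pow_eq_sum_piAntidiag]
  exact integrable_finsetSum _ fun k _ => ((hμ k).const_mul _).const_mul _

theorem integral_sum_mul_pow (hμ : ∀ k : ι → ℕ, Integrable (fun x => ∏ j, x j ^ k j) μ)
    (n : ℕ) : ∫ x, (∑ j, u j * x j) ^ n ∂μ = ∑ k ∈ piAntidiag univ n,
      (Nat.multinomial univ k : ℝ) * ((∏ j, u j ^ k j) * ∫ x, ∏ j, x j ^ k j ∂μ) := by
  simp_rw [sum_mul_pow_eq_sum_piAntidiag]
  rw [integral_finsetSum _ fun k _ => ((hμ k).const_mul _).const_mul _]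
  simp_rw [integral_const_mul]

theorem abs_integral_sum_mul_pow_le {n : ℕ} {B : ℝ}
    (hμ : ∀ k : ι → ℕ, Integrable (fun x => ∏ j, x j ^ k j) μ)
    (hB : ∀ k ∈ piAntidiag univ n, |∫ x, ∏ j, x j ^ k j ∂μ| ≤ B) :
    |∫ x, (∑ j, u j * x j) ^ n ∂μ| ≤ B * (∑ j, |u j|) ^ n := by
  rw [integral_sum_mul_pow u hμ]
  exact abs_sum_multinomial_mul_le u n hB

theorem abs_integral_sum_mul_pow_sub_le {n : ℕ} {ε : ℝ}
    (hμ : ∀ k : ι → ℕ, Integrable (fun x => ∏ j, x j ^ k j) μ)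
    (hν : ∀ k : ι → ℕ, Integrable (fun x => ∏ j, x j ^ k j) ν)
    (hε : ∀ k ∈ piAntidiag univ n,
      |(∫ x, ∏ j, x j ^ k j ∂μ) - ∫ x, ∏ j, x j ^ k j ∂ν| ≤ ε) :
    |(∫ x, (∑ j, u j * x j) ^ n ∂μ) - ∫ x, (∑ j, u j * x j) ^ n ∂ν| ≤ ε * (∑ j, |u j|) ^ n := by
  rw [integral_sum_mul_pow u hμ, integral_sum_mul_pow u hν, ← sum_sub_distrib]
  simp_rw [← mul_sub]
  exact abs_sum_multinomial_mul_le u n hε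

theorem abs_integral_sum_mul_pow_div_factorial_le {t n : ℕ} {C : ℝ}
    (hμ : ∀ k : ι → ℕ, Integrable (fun x => ∏ j, x j ^ k j) μ)
    (hbound : ∀ k : ι → ℕ, t < ∑ j, k j →
      |∫ x, ∏ j, x j ^ k j ∂μ| ≤ (C * Real.sqrt (∑ j, k j)) ^ (∑ j, k j))
    (hMC : 0 ≤ (∑ j, |u j|) * C)
    (hMCt : 2 * Real.exp 1 * ((∑ j, |u j|) * C) ≤ Real.sqrt (t + 1)) (hn : t < n) :
    |∫ x, (∑ j, u j * x j) ^ n ∂μ| / n ! ≤ (1 / 2) ^ n := by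
  have hmoment : |∫ x, (∑ j, u j * x j) ^ n ∂μ| ≤ ((∑ j, |u j|) * C * Real.sqrt n) ^ n := by
    refine (abs_integral_sum_mul_pow_le u (B := (C * Real.sqrt n) ^ n) hμ fun k hk => ?_).trans_eq
      (by ring)
    have hk : ∑ j, k j = n := (mem_piAntidiag.1 hk).1
    simpa [← Nat.cast_sum, hk] using hbound k (hk ▸ hn)
  calc _ ≤ ((∑ j, |u j|) * C * Real.sqrt n) ^ n / n ! := by gcongr
    _ ≤ (1 / 2) ^ n := mul_sqrt_pow_div_factorial_le hMC hMCt hn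

theorem norm_integral_cexp_sub_sum_le_half_pow {t N : ℕ} {C : ℝ}
    (hμ : ∀ k : ι → ℕ, Integrable (fun x => ∏ j, x j ^ k j) μ)
    (hbound : ∀ k : ι → ℕ, t < ∑ j, k j →
      |∫ x, ∏ j, x j ^ k j ∂μ| ≤ (C * Real.sqrt (∑ j, k j)) ^ (∑ j, k j))
    (hMC : 0 ≤ (∑ j, |u j|) * C)
    (hMCt : 2 * Real.exp 1 * ((∑ j, |u j|) * C) ≤ Real.sqrt (t + 1))
    (htN : t < N) (hN : Even N) :
    ‖∫ x, cexp (I * ((∑ j, u j * x j : ℝ) : ℂ)) ∂μ -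
        ∑ n ∈ range N, I ^ n / (n ! : ℂ) * ↑(∫ x, (∑ j, u j * x j) ^ n ∂μ)‖ ≤ (1 / 2) ^ N := by
  refine (norm_integral_cexp_I_mul_sub_sum_range_le (integrable_sum_mul_pow u hμ) N).trans ?_
  simp_rw [hN.pow_abs]
  calc _ ≤ |∫ x, (∑ j, u j * x j) ^ N ∂μ| / N ! := by gcongr; exact le_abs_self _
    _ ≤ (1 / 2) ^ N := abs_integral_sum_mul_pow_div_factorial_le u hμ hbound hMC hMCt htN

end LinearForm

theorem mul_nonneg_and_mul_le_of_le_div {M c s : ℝ} (hM : 0 ≤ M) (hs : 0 ≤ s) (h : M ≤ s / c) :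
    0 ≤ M * c ∧ M * c ≤ s := by
  rcases lt_trichotomy c 0 with hc | rfl | hc
  · have : M = 0 := le_antisymm (h.trans (div_nonpos_of_nonneg_of_nonpos hs hc.le)) hM
    simp [this, hs]
  · simp [hs]
  · exact ⟨mul_nonneg hM hc.le, (le_div_iff₀ hc).1 h⟩

theorem stmt9_general (d : ℕ) (p q : Measure (Fin d → ℝ))
    (t : ℕ) (ε C : ℝ)
    (hintp : ∀ k : Fin d → ℕ, Integrable (fun x => ∏ j, x j ^ k j) p)
    (hintq : ∀ k : Fin d → ℕ, Integrable (fun x => ∏ j, x j ^ k j) q)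
    (hclose : ∀ k : Fin d → ℕ, (∑ j, k j) ≤ t →
      |(∫ x, ∏ j, x j ^ k j ∂p) - ∫ x, ∏ j, x j ^ k j ∂q| ≤ ε)
    (hboundp : ∀ k : Fin d → ℕ, t < ∑ j, k j →
      |∫ x, ∏ j, x j ^ k j ∂p| ≤ (C * Real.sqrt (∑ j, k j)) ^ (∑ j, k j))
    (hboundq : ∀ k : Fin d → ℕ, t < ∑ j, k j →
      |∫ x, ∏ j, x j ^ k j ∂q| ≤ (C * Real.sqrt (∑ j, k j)) ^ (∑ j, k j))
    (u : Fin d → ℝ)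
    (hu : (∑ j, |u j|) ≤ Real.sqrt ((t : ℝ) + 1) / (2 * Real.exp 1 * C)) :
    ‖(∫ x, Complex.exp (Complex.I * ((∑ j, u j * x j : ℝ) : ℂ)) ∂p) -
        ∫ x, Complex.exp (Complex.I * ((∑ j, u j * x j : ℝ) : ℂ)) ∂q‖ ≤
      ε * Real.exp (∑ j, |u j|) + (2 : ℝ) ^ ((1 : ℤ) - (t : ℤ)) := by
  have hM : 0 ≤ ∑ j, |u j| := sum_nonneg fun j _ => abs_nonneg _
  have hε : 0 ≤ ε := (abs_nonneg _).trans (hclose 0 (by simp))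
  obtain ⟨hMC, hMCt⟩ := mul_nonneg_and_mul_le_of_le_div hM (Real.sqrt_nonneg _) hu
  rw [show (∑ j, |u j|) * (2 * Real.exp 1 * C) = 2 * Real.exp 1 * ((∑ j, |u j|) * C) by ring]
    at hMC hMCt
  replace hMC : 0 ≤ (∑ j, |u j|) * C := nonneg_of_mul_nonneg_right hMC (by positivity)
  have htN : t < 2 * (t + 1) := by omega
  refine norm_sub_le_of_partial_sums hε hM htN
    (norm_integral_cexp_sub_sum_le_half_pow u hintp hboundp hMC hMCt htN (even_two_mul _))
    (norm_integral_cexp_sub_sum_le_half_pow u hintq hboundq hMC hMCt htN (even_two_mul _))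
    (fun n hn => abs_integral_sum_mul_pow_sub_le u hintp hintq fun k hk => hclose k ?_)
    (fun n hn => abs_integral_sum_mul_pow_div_factorial_le u hintp hboundp hMC hMCt hn)
    (fun n hn => abs_integral_sum_mul_pow_div_factorial_le u hintq hboundq hMC hMCt hn)
  exact (mem_piAntidiag.1 hk).1.trans_le hn

/-- Bound on characteristic functions from moments. If every mixed moment of
order `≤ t` of `p` differs from that of `q` by at most `ε`, and all mixed moments of both
of order `> t` are bounded by `(C√k)^k`, then for `‖u‖₁ ≤ √(t+1)/(2eC)`,
`|φ(u) − γ(u)| ≤ ε·exp(‖u‖₁) + 2^{1−t}`. -/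
theorem stmt9 (d : ℕ) (p q : Measure (Fin d → ℝ))
    [IsProbabilityMeasure p] [IsProbabilityMeasure q]
    (t : ℕ) (ε C : ℝ) (hε : 0 < ε) (hC : 0 ≤ C)
    (hintp : ∀ k : Fin d → ℕ, Integrable (fun x => ∏ j, x j ^ k j) p)
    (hintq : ∀ k : Fin d → ℕ, Integrable (fun x => ∏ j, x j ^ k j) q)
    (hclose : ∀ k : Fin d → ℕ, (∑ j, k j) ≤ t →
      |(∫ x, ∏ j, x j ^ k j ∂p) - ∫ x, ∏ j, x j ^ k j ∂q| ≤ ε)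
    (hboundp : ∀ k : Fin d → ℕ, t < ∑ j, k j →
      |∫ x, ∏ j, x j ^ k j ∂p| ≤ (C * Real.sqrt (∑ j, k j)) ^ (∑ j, k j))
    (hboundq : ∀ k : Fin d → ℕ, t < ∑ j, k j →
      |∫ x, ∏ j, x j ^ k j ∂q| ≤ (C * Real.sqrt (∑ j, k j)) ^ (∑ j, k j))
    (u : Fin d → ℝ)
    (hu : (∑ j, |u j|) ≤ Real.sqrt ((t : ℝ) + 1) / (2 * Real.exp 1 * C)) :
    ‖(∫ x, Complex.exp (Complex.I * ((∑ j, u j * x j : ℝ) : ℂ)) ∂p) -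
        ∫ x, Complex.exp (Complex.I * ((∑ j, u j * x j : ℝ) : ℂ)) ∂q‖ ≤
      ε * Real.exp (∑ j, |u j|) + (2 : ℝ) ^ ((1 : ℤ) - (t : ℤ)) :=
  stmt9_general d p q t ε C hintp hintq hclose hboundp hboundq u hu
end

section
/- Let p, q be probability measures on ℝ^d whose cumulant generating functions both exist on the imaginary axis with characteristic functions φ, γ. Suppose each joint cumulant of order k of p differs from that of q by at most ε^k in absolute value. Then for all u ∈ ℝ^d, |φ(u) − γ(u)| ≤ max( exp(exp(ε‖u‖₁) − 1) − 1, 1 − exp(1 − exp(ε‖u‖₁)) ). -/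
open MeasureTheory Finset

/-!
The cumulant series of `p` and `q` at `u` sum to `log φ(u)` and `log γ(u)`, so their difference
is a series whose `k`-th term is bounded by `∏ j, (ε |u j|) ^ k j / k j!`; these bounds are the
non-constant terms of the expansion of `exp (ε ‖u‖₁)`, whence
`‖log φ(u) - log γ(u)‖ ≤ exp (ε ‖u‖₁) - 1`. Writing `φ - γ = φ (1 - exp (log γ - log φ))` with
`‖φ‖ ≤ 1` and `‖exp z - 1‖ ≤ exp ‖z‖ - 1` gives the first branch of the maximum.

Since `Complex.log 0 = 0`, this needs `φ(u) ≠ 0`. Along the ray `t ↦ φ(t u)` the logarithm is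
an everywhere convergent power series in `t`, hence continuous; so `{t | φ(t u) ≠ 0}`, which is
where `φ(t u) = exp (log φ(t u))`, is clopen in `ℝ` and contains `0`.
-/

section ExpMonomial

variable {d : ℕ}

def expMonomial {𝕜 : Type*} [Field 𝕜] (v : Fin d → 𝕜) (k : Fin d → ℕ) : 𝕜 :=
  ∏ j, v j ^ k j / ((k j).factorial : 𝕜)

theorem expMonomial_const_mul {𝕜 : Type*} [Field 𝕜] (c : 𝕜) (v : Fin d → 𝕜) (k : Fin d → ℕ) :
    expMonomial (fun j => c * v j) k = c ^ (∑ j, k j) * expMonomial v k := by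
  simp only [expMonomial, mul_pow, mul_div_assoc, prod_mul_distrib, prod_pow_eq_pow_sum]

theorem norm_expMonomial {𝕜 : Type*} [RCLike 𝕜] (v : Fin d → 𝕜) (k : Fin d → ℕ) :
    ‖expMonomial v k‖ = expMonomial (fun j => ‖v j‖) k := by
  simp [expMonomial, norm_prod, norm_div, norm_pow]

theorem hasSum_fin_prod_of_nonneg {β : Type*} {f : Fin d → β → ℝ} {s : Fin d → ℝ}
    (hf : ∀ j b, 0 ≤ f j b) (h : ∀ j, HasSum (f j) (s j)) :
    HasSum (fun k : Fin d → β => ∏ j, f j (k j)) (∏ j, s j) := by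
  induction d with
  | zero => simp [hasSum_unique]
  | succ n ih =>
    have htail : HasSum (fun k : Fin n → β => ∏ j : Fin n, f j.succ (k j))
        (∏ j : Fin n, s j.succ) :=
      ih (fun j => hf j.succ) (fun j => h j.succ)
    have htail_nonneg (k : Fin n → β) : 0 ≤ ∏ j : Fin n, f j.succ (k j) :=
      prod_nonneg fun j _ => hf _ _
    have hhead_nonneg : ∀ b, 0 ≤ f 0 b := hf 0
    have hsummable := (h 0).summable.mul_of_nonneg htail.summable hhead_nonneg htail_nonneg
    have hpair := (h 0).mul htail hsummable
    simpa [Fin.prod_univ_succ, Function.comp_def, Fin.consEquiv, Fin.tail] using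
      (Fin.consEquiv fun _ => β).symm.hasSum_iff.mpr hpair

theorem Real.hasSum_expMonomial (x : Fin d → ℝ) (hx : ∀ j, 0 ≤ x j) :
    HasSum (expMonomial x) (Real.exp (∑ j, x j)) := by
  have hexp (j : Fin d) : HasSum (fun n : ℕ => x j ^ n / n.factorial) (Real.exp (x j)) := by
    rw [Real.exp_eq_exp_ℝ]
    exact NormedSpace.expSeries_div_hasSum_exp (x j)
  have hnonneg (j : Fin d) (n : ℕ) : 0 ≤ x j ^ n / n.factorial := by
    have := hx j
    positivity
  have hprod := hasSum_fin_prod_of_nonneg hnonneg hexp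
  rw [← Real.exp_sum] at hprod
  exact hprod

theorem HasSum.subtype_sum_pos {α : Type*} [AddCommGroup α] [TopologicalSpace α]
    [IsTopologicalAddGroup α] {f : (Fin d → ℕ) → α} {a : α} (h : HasSum f a) :
    HasSum (fun k : {k : Fin d → ℕ // 0 < ∑ j, k j} => f k) (a - f 0) := by
  have hpos : ∀ k : Fin d → ℕ, k ∉ ({0} : Finset _) ↔ 0 < ∑ j, k j := by
    simp [pos_iff_ne_zero, sum_eq_zero_iff, funext_iff]
  have hcompl := (Finset.hasSum_compl_iff (f := f) (a := a - f 0) {0}).mpr (by simpa using h)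
  exact (Equiv.subtypeEquivRight hpos).hasSum_iff.mp hcompl

theorem norm_sub_le_exp_sub_one_of_coeff_sub_le {v : Fin d → ℂ}
    {κp κq : (Fin d → ℕ) → ℂ} {Lp Lq : ℂ} {ε : ℝ} (hε : 0 ≤ ε)
    (hp : HasSum (fun k : {k : Fin d → ℕ // 0 < ∑ j, k j} => κp k * expMonomial v k) Lp)
    (hq : HasSum (fun k : {k : Fin d → ℕ // 0 < ∑ j, k j} => κq k * expMonomial v k) Lq)
    (hκ : ∀ k : Fin d → ℕ, 0 < ∑ j, k j → ‖κp k - κq k‖ ≤ ε ^ (∑ j, k j)) :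
    ‖Lp - Lq‖ ≤ Real.exp (ε * ∑ j, ‖v j‖) - 1 := by
  have hmajor : HasSum (fun k : {k : Fin d → ℕ // 0 < ∑ j, k j} =>
      expMonomial (fun j => ε * ‖v j‖) k) (Real.exp (ε * ∑ j, ‖v j‖) - 1) := by
    simpa [mul_sum, expMonomial] using
      (Real.hasSum_expMonomial (fun j => ε * ‖v j‖) fun j => by positivity).subtype_sum_pos
  rw [← (hp.sub hq).tsum_eq]
  refine tsum_of_norm_bounded hmajor fun k => ?_
  calc ‖κp k * expMonomial v k - κq k * expMonomial v k‖
      = ‖κp k - κq k‖ * expMonomial (fun j => ‖v j‖) k := by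
        rw [← sub_mul, norm_mul, norm_expMonomial]
    _ ≤ ε ^ (∑ j, k.1 j) * expMonomial (fun j => ‖v j‖) k := by
        gcongr
        · exact prod_nonneg fun j _ => by positivity
        · exact hκ k k.2
    _ = expMonomial (fun j => ε * ‖v j‖) k := (expMonomial_const_mul _ _ _).symm

end ExpMonomial

theorem continuous_tsum_mul_pow {ι : Type*} (a : ι → ℂ) (n : ι → ℕ)
    (h : ∀ t : ℝ, Summable fun i => a i * (t : ℂ) ^ n i) :
    Continuous fun t : ℝ => ∑' i, a i * (t : ℂ) ^ n i := by
  refine continuous_iff_continuousAt.2 fun t₀ => ?_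
  set R := |t₀| + 1
  have hR : 0 ≤ R := by positivity
  have hcont : ContinuousOn (fun t : ℝ => ∑' i, a i * (t : ℂ) ^ n i) (Metric.ball 0 R) := by
    refine continuousOn_tsum (u := fun i => ‖a i‖ * R ^ n i) (fun i => by fun_prop) ?_ ?_
    · simpa [norm_pow, abs_of_nonneg hR] using (h R).norm
    · intro i t ht
      rw [norm_mul, norm_pow, Complex.norm_real]
      gcongr
      simpa using (mem_ball_zero_iff.mp ht).le
  exact hcont.continuousAt (Metric.isOpen_ball.mem_nhds (by simp [R]))

theorem ne_zero_of_continuous_log {X : Type*} [TopologicalSpace X] [PreconnectedSpace X]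
    {h : X → ℂ} (hh : Continuous h) (hlog : Continuous fun x => Complex.log (h x))
    {x₀ : X} (hx₀ : h x₀ ≠ 0) (x : X) : h x ≠ 0 := by
  have hzeros : {x | h x = Complex.exp (Complex.log (h x))} = {x | h x ≠ 0} := by
    ext x
    by_cases hx : h x = 0 <;> simp [hx, Complex.exp_log]
  have hclopen : IsClopen {x | h x ≠ 0} :=
    ⟨hzeros ▸ isClosed_eq hh (Complex.continuous_exp.comp hlog),
      isOpen_ne_fun hh continuous_const⟩
  exact Set.eq_univ_iff_forall.mp (hclopen.eq_univ ⟨x₀, hx₀⟩) x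

theorem norm_sub_le_exp_norm_log_sub_sub_one {z w : ℂ} (hz : ‖z‖ ≤ 1) (hz0 : z ≠ 0)
    (hw0 : w ≠ 0) : ‖z - w‖ ≤ Real.exp ‖Complex.log z - Complex.log w‖ - 1 := by
  set ζ := Complex.log w - Complex.log z
  have hfactor : z - w = z * (1 - Complex.exp ζ) := by
    rw [mul_one_sub, Complex.exp_sub, Complex.exp_log hz0, Complex.exp_log hw0,
      mul_div_cancel₀ _ hz0]
  have hexp : ‖Complex.exp ζ - 1‖ ≤ Real.exp ‖ζ‖ - 1 := by
    simpa using Complex.norm_exp_sub_sum_le_exp_norm_sub_sum ζ 1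
  calc ‖z - w‖ = ‖z‖ * ‖Complex.exp ζ - 1‖ := by rw [hfactor, norm_mul, norm_sub_rev 1]
    _ ≤ 1 * (Real.exp ‖ζ‖ - 1) := mul_le_mul hz hexp (norm_nonneg _) zero_le_one
    _ = Real.exp ‖Complex.log z - Complex.log w‖ - 1 := by rw [one_mul, norm_sub_rev]

/-- Mathlib's `charFun` needs an inner product space, and `Fin d → ℝ` carries the sup norm,
so the pairing `∑ j, u j * x j` is written out. -/
noncomputable def charFunDot {d : ℕ} (μ : Measure (Fin d → ℝ)) (u : Fin d → ℝ) : ℂ :=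
  ∫ x, Complex.exp (Complex.I * ((∑ j, u j * x j : ℝ) : ℂ)) ∂μ

section CharFunDot

variable {d : ℕ} (μ : Measure (Fin d → ℝ))

theorem continuous_charFunDot [IsFiniteMeasure μ] : Continuous (charFunDot μ) :=
  continuous_of_dominated (bound := fun _ => 1)
    (fun _ => (by fun_prop : Continuous _).aestronglyMeasurable)
    (fun _ => .of_forall fun _ => (Complex.norm_exp_I_mul_ofReal _).le)
    (integrable_const 1) (.of_forall fun _ => by fun_prop)

variable [IsProbabilityMeasure μ]

theorem norm_charFunDot_le_one (u : Fin d → ℝ) : ‖charFunDot μ u‖ ≤ 1 := by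
  rw [charFunDot]
  simpa using norm_integral_le_of_norm_le_const (μ := μ)
    (.of_forall fun x => (Complex.norm_exp_I_mul_ofReal (∑ j, u j * x j)).le)

theorem charFunDot_zero : charFunDot μ 0 = 1 := by
  simp [charFunDot]

theorem charFunDot_ne_zero_of_hasSum_log (κ : (Fin d → ℕ) → ℂ)
    (hμ : ∀ u : Fin d → ℝ, HasSum (fun k : {k : Fin d → ℕ // 0 < ∑ j, k j} =>
      κ k * expMonomial (fun j => Complex.I * (u j : ℂ)) k) (Complex.log (charFunDot μ u)))
    (u : Fin d → ℝ) : charFunDot μ u ≠ 0 := by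
  have hscale : ∀ (t : ℝ) (k : {k : Fin d → ℕ // 0 < ∑ j, k j}),
      κ k * expMonomial (fun j => Complex.I * ((t * u j : ℝ) : ℂ)) k =
        κ k * expMonomial (fun j => Complex.I * (u j : ℂ)) k * (t : ℂ) ^ (∑ j, k.1 j) := by
    intro t k
    have hv : (fun j => Complex.I * ((t * u j : ℝ) : ℂ)) =
        fun j => (t : ℂ) * (Complex.I * (u j : ℂ)) := by
      funext j; push_cast; ring
    rw [hv, expMonomial_const_mul]
    ring
  have hlog : Continuous fun t : ℝ => Complex.log (charFunDot μ fun j => t * u j) := by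
    refine (continuous_tsum_mul_pow
      (fun k : {k : Fin d → ℕ // 0 < ∑ j, k j} =>
        κ k * expMonomial (fun j => Complex.I * (u j : ℂ)) k)
      (fun k => ∑ j, k.1 j) fun t => ?_).congr fun t => ?_
    · simpa only [hscale] using (hμ fun j => t * u j).summable
    · simpa only [hscale] using (hμ fun j => t * u j).tsum_eq
  simpa using ne_zero_of_continuous_log ((continuous_charFunDot μ).comp (by fun_prop)) hlog
    (x₀ := 0) (by simpa [Pi.zero_def] using (charFunDot_zero μ).trans_ne one_ne_zero) 1

end CharFunDot

/-- Bound on characteristic functions from cumulants. Suppose the cumulant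
expansions of `p` and `q` exist on the imaginary axis: there are joint cumulants
`κp, κq : (Fin d → ℕ) → ℂ` such that for all `u`, the series
`∑_k κ(k) ∏_j (i u_j)^{k_j}/k_j!` (over multi-indices `k ≠ 0`) sums to the logarithm of
the characteristic function. If each cumulant of order `k` of `p` differs from that of `q`
by at most `ε^k`, then for all `u`,
`|φ(u) − γ(u)| ≤ max(exp(exp(ε‖u‖₁) − 1) − 1, 1 − exp(1 − exp(ε‖u‖₁)))`. -/
theorem stmt10 (d : ℕ) (p q : Measure (Fin d → ℝ))
    [IsProbabilityMeasure p] [IsProbabilityMeasure q]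
    (κp κq : (Fin d → ℕ) → ℂ) (ε : ℝ) (hε : 0 ≤ ε)
    (hp : ∀ u : Fin d → ℝ,
      HasSum (fun k : {k : Fin d → ℕ // 0 < ∑ j, k j} =>
          κp k * ∏ j, (Complex.I * (u j : ℂ)) ^ (k.1 j) / (Nat.factorial (k.1 j) : ℂ))
        (Complex.log (∫ x, Complex.exp (Complex.I * ((∑ j, u j * x j : ℝ) : ℂ)) ∂p)))
    (hq : ∀ u : Fin d → ℝ,
      HasSum (fun k : {k : Fin d → ℕ // 0 < ∑ j, k j} =>
          κq k * ∏ j, (Complex.I * (u j : ℂ)) ^ (k.1 j) / (Nat.factorial (k.1 j) : ℂ))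
        (Complex.log (∫ x, Complex.exp (Complex.I * ((∑ j, u j * x j : ℝ) : ℂ)) ∂q)))
    (hκ : ∀ k : Fin d → ℕ, 0 < ∑ j, k j → ‖κp k - κq k‖ ≤ ε ^ (∑ j, k j))
    (u : Fin d → ℝ) :
    ‖(∫ x, Complex.exp (Complex.I * ((∑ j, u j * x j : ℝ) : ℂ)) ∂p) -
        ∫ x, Complex.exp (Complex.I * ((∑ j, u j * x j : ℝ) : ℂ)) ∂q‖ ≤
      max (Real.exp (Real.exp (ε * ∑ j, |u j|) - 1) - 1)
        (1 - Real.exp (1 - Real.exp (ε * ∑ j, |u j|))) := by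
  change ‖charFunDot p u - charFunDot q u‖ ≤ _
  have hlog := norm_sub_le_exp_sub_one_of_coeff_sub_le hε (hp u) (hq u) hκ
  simp only [norm_mul, Complex.norm_I, Complex.norm_real, Real.norm_eq_abs, one_mul] at hlog
  calc ‖charFunDot p u - charFunDot q u‖
      ≤ Real.exp ‖Complex.log (charFunDot p u) - Complex.log (charFunDot q u)‖ - 1 :=
        norm_sub_le_exp_norm_log_sub_sub_one (norm_charFunDot_le_one p u)
          (charFunDot_ne_zero_of_hasSum_log p κp hp u)
          (charFunDot_ne_zero_of_hasSum_log q κq hq u)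
    _ ≤ Real.exp (Real.exp (ε * ∑ j, |u j|) - 1) - 1 := by gcongr; exact hlog
    _ ≤ _ := le_max_left _ _
end
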